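/- arXiv:1901.10729 — 8 statements merged into one kernel-verified Lean document; each statement's English description precedes it below -/
import Mathlib

section
/- A sequence of filters (F_n) on a set X is totally disjoint if and only if (F_n) is pairwise disjoint (F_n does not mesh F_m for n ≠ m) and for each n the contour Li F_k is disjoint from F_n. -/
open Filter

/-- The contour (set-theoretic lower limit) of a sequence of filters:
`A ∈ contourSeq F` iff `A ∈ F n` for all sufficiently large `n`. -/
def contourSeq {X : Type*} (F : ℕ → Filter X) : Filter X := Filter.atTop.bind F

/-- Two filters mesh (`#`) if every member of the first intersects every member of the second. -/
def Mesh {X : Type*} (F G : Filter X) : Prop := ∀ A ∈ F, ∀ B ∈ G, (A ∩ B).Nonempty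

/-- A sequence of filters is totally disjoint if there are pairwise disjoint sets `A n ∈ F n`. -/
def TotallyDisjoint {X : Type*} (F : ℕ → Filter X) : Prop :=
  ∃ A : ℕ → Set X, (∀ n, A n ∈ F n) ∧ Pairwise fun m n => Disjoint (A m) (A n)

theorem totallyDisjoint_iff {X : Type*} (F : ℕ → Filter X) :
    TotallyDisjoint F ↔
      ((∀ m n, m ≠ n → ¬ Mesh (F m) (F n)) ∧ ∀ n, ¬ Mesh (contourSeq F) (F n)) := by
  constructor
  · rintro ⟨A, hA, hdisj⟩
    constructor
    · intro m n hmn hM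
      obtain ⟨x, hx1, hx2⟩ := hM (A m) (hA m) (A n) (hA n)
      exact Set.disjoint_left.mp (hdisj hmn) hx1 hx2
    · intro n hM
      have hB : (⋃ k ∈ Set.Ici (n+1), A k) ∈ contourSeq F := by
        rw [contourSeq, mem_bind]
        refine ⟨Set.Ici (n+1), mem_atTop _, fun k hk => ?_⟩
        exact mem_of_superset (hA k) (Set.subset_biUnion_of_mem hk)
      obtain ⟨x, hx1, hx2⟩ := hM _ hB (A n) (hA n)
      simp only [Set.mem_iUnion, Set.mem_Ici] at hx1
      obtain ⟨k, hk, hxk⟩ := hx1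
      exact Set.disjoint_left.mp (hdisj (show k ≠ n by omega)) hxk hx2
  · rintro ⟨h1, h2⟩
    have h1' : ∀ m n, ∃ s t : Set X, m ≠ n → s ∈ F m ∧ t ∈ F n ∧ s ∩ t = ∅ := by
      intro m n
      by_cases h : m ≠ n
      · have hm := h1 m n h
        rw [Mesh] at hm; push_neg at hm
        obtain ⟨s, hs, t, ht, hst⟩ := hm
        exact ⟨s, t, fun _ => ⟨hs, ht, hst⟩⟩
      · exact ⟨∅, ∅, fun h' => absurd h' h⟩
    choose S T hST using h1'
    have h2' : ∀ n, ∃ C D : Set X, ∃ N : ℕ,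
        D ∈ F n ∧ C ∩ D = ∅ ∧ ∀ k, N ≤ k → C ∈ F k := by
      intro n
      have hm := h2 n
      rw [Mesh] at hm; push_neg at hm
      obtain ⟨Cn, hC, Dn, hDn, hCD⟩ := hm
      rw [contourSeq, mem_bind] at hC
      obtain ⟨t, ht, hts⟩ := hC
      rw [mem_atTop_sets] at ht
      obtain ⟨Nn, hN⟩ := ht
      exact ⟨Cn, Dn, Nn, hDn, hCD,
        fun k hk => hts k (hN k hk)⟩
    choose C D N hD hCD hC using h2'
    set N' : ℕ → ℕ := fun m => max (N m) (m+1) with hN'def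
    set A : ℕ → Set X := fun n =>
      D n ∩ ((⋂ m ∈ (Finset.range n).filter (fun m => N' m ≤ n), C m) ∩
        ((⋂ k ∈ Finset.Ioo n (N' n), S n k) ∩
         (⋂ m ∈ (Finset.range n).filter (fun m => n < N' m), T m n))) with hAdef
    have hAmem : ∀ n x, x ∈ A n ↔
        x ∈ D n ∧ (∀ m, m < n → N' m ≤ n → x ∈ C m) ∧
          (∀ k, n < k → k < N' n → x ∈ S n k) ∧
          (∀ m, m < n → n < N' m → x ∈ T m n) := by
      intro n x
      simp only [hAdef, Set.mem_inter_iff, Set.mem_iInter, Finset.mem_filter,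
        Finset.mem_range, Finset.mem_Ioo, and_imp]
    refine ⟨A, ?_, ?_⟩
    · intro n
      refine inter_mem (hD n) (inter_mem ?_ (inter_mem ?_ ?_))
      · refine (Filter.biInter_finset_mem _).mpr fun m hm => ?_
        simp only [Finset.mem_filter, Finset.mem_range] at hm
        exact hC m n (le_trans (le_max_left _ _) hm.2)
      · refine (Filter.biInter_finset_mem _).mpr fun k hk => ?_
        simp only [Finset.mem_Ioo] at hk
        exact (hST n k (by omega)).1
      · refine (Filter.biInter_finset_mem _).mpr fun m hm => ?_
        simp only [Finset.mem_filter, Finset.mem_range] at hm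
        exact (hST m n (by omega)).2.1
    · have key : ∀ m n, m < n → Disjoint (A m) (A n) := by
        intro m n hmn
        rw [Set.disjoint_left]
        intro x hxm hxn
        rw [hAmem] at hxm hxn
        by_cases h : N' m ≤ n
        · have hxC : x ∈ C m := hxn.2.1 m hmn h
          have hxD : x ∈ D m := hxm.1
          have : x ∈ C m ∩ D m := ⟨hxC, hxD⟩
          rw [hCD m] at this
          exact this
        · push_neg at h
          have hxS : x ∈ S m n := hxm.2.2.1 n hmn h
          have hxT : x ∈ T m n := hxn.2.2.2 m hmn h
          have : x ∈ S m n ∩ T m n := ⟨hxS, hxT⟩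
          rw [(hST m n hmn.ne).2.2] at this
          exact this
      intro m n hmn
      rcases lt_or_gt_of_ne hmn with h | h
      · exact key m n h
      · exact (key n m h).symm
end

section
/- (Alternative) Let (F_n) and (G_k) be sequences of filters on a set X, with contours F := Li F_n and G := Li G_k. If F meshes G, then at least one of the following holds: (A.1) for every m there exists (n,k) with m < min(n,k) and F_n # G_k; (A.2) F # G_k for infinitely many k; (A.3) F_n # G for infinitely many n. -/
open Filter

lemma mem_contourSeq {X : Type*} {F : ℕ → Filter X} {s : Set X} :
    s ∈ contourSeq F ↔ ∃ N, ∀ n, N ≤ n → s ∈ F n := by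
  rw [contourSeq, Filter.mem_bind]
  constructor
  · rintro ⟨t, ht, hts⟩
    obtain ⟨N, hN⟩ := Filter.mem_atTop_sets.mp ht
    exact ⟨N, fun n hn => hts n (hN n hn)⟩
  · rintro ⟨N, hN⟩
    exact ⟨Set.Ici N, Filter.Ici_mem_atTop N, fun n hn => hN n hn⟩

theorem contour_alternative {X : Type*} (F G : ℕ → Filter X)
    (h : Mesh (contourSeq F) (contourSeq G)) :
    (∀ m, ∃ n k, m < n ∧ m < k ∧ Mesh (F n) (G k)) ∨
      {k | Mesh (contourSeq F) (G k)}.Infinite ∨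
      {n | Mesh (F n) (contourSeq G)}.Infinite := by
  by_contra hcon
  push_neg at hcon
  obtain ⟨h1, h2, h3⟩ := hcon
  obtain ⟨m, hm⟩ := h1
  obtain ⟨K, hK⟩ := h2.bddAbove
  obtain ⟨N, hN⟩ := h3.bddAbove
  set M := max m (max K N) with hM
  -- for k > M, contourSeq F does not mesh G k
  have hG : ∀ k, M < k → ¬ Mesh (contourSeq F) (G k) := by
    intro k hk hmesh
    have h1 : k ≤ K := hK hmesh
    have h2 : K ≤ M := le_trans (le_max_left K N) (le_max_right m _)
    omega
  have hF : ∀ n, M < n → ¬ Mesh (F n) (contourSeq G) := by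
    intro n hn hmesh
    have h1 : n ≤ N := hN hmesh
    have h2 : N ≤ M := le_trans (le_max_right K N) (le_max_right m _)
    omega
  have hFG : ∀ n k, M < n → M < k → ¬ Mesh (F n) (G k) := by
    intro n k hn hk
    have hmm : m ≤ M := le_max_left _ _
    exact hm n k (by omega) (by omega)
  -- choose witnesses
  have exC : ∀ k, ∃ (C D : Set X) (p : ℕ), M < k →
      (∀ n, p ≤ n → C ∈ F n) ∧ D ∈ G k ∧ C ∩ D = ∅ := by
    intro k
    by_cases hk : M < k
    · have hnm := hG k hk
      unfold Mesh at hnm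
      push_neg at hnm
      obtain ⟨C, hC, D, hD, hCD⟩ := hnm
      obtain ⟨p, hp⟩ := mem_contourSeq.mp hC
      exact ⟨C, D, p, fun _ => ⟨hp, hD, hCD⟩⟩
    · exact ⟨∅, ∅, 0, fun hk' => absurd hk' hk⟩
  choose Cs Ds φ hCD using exC
  have exE : ∀ n, ∃ (E H : Set X) (p : ℕ), M < n →
      E ∈ F n ∧ (∀ k, p ≤ k → H ∈ G k) ∧ E ∩ H = ∅ := by
    intro n
    by_cases hn : M < n
    · have hnm := hF n hn
      unfold Mesh at hnm
      push_neg at hnm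
      obtain ⟨E, hE, H, hH, hEH⟩ := hnm
      obtain ⟨p, hp⟩ := mem_contourSeq.mp hH
      exact ⟨E, H, p, fun _ => ⟨hE, hp, hEH⟩⟩
    · exact ⟨∅, ∅, 0, fun hn' => absurd hn' hn⟩
  choose Es Hs ψ hEH using exE
  have exS : ∀ n k, ∃ (S T : Set X), M < n → M < k →
      S ∈ F n ∧ T ∈ G k ∧ S ∩ T = ∅ := by
    intro n k
    by_cases hnk : M < n ∧ M < k
    · have hnm := hFG n k hnk.1 hnk.2
      unfold Mesh at hnm
      push_neg at hnm
      obtain ⟨S, hS, T, hT, hST⟩ := hnm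
      exact ⟨S, T, fun _ _ => ⟨hS, hT, hST⟩⟩
    · exact ⟨∅, ∅, fun hn hk => absurd ⟨hn, hk⟩ hnk⟩
  choose Ss Ts hST using exS
  -- the "bad pair" predicate
  set P : ℕ → ℕ → Prop := fun n k => (k ≤ n ∧ n < φ k) ∨ (n ≤ k ∧ k < ψ n) with hP
  -- build the sets
  set A : ℕ → Set X := fun n =>
    (Es n ∩ ⋂ k ∈ {k | M < k ∧ k ≤ n ∧ φ k ≤ n}, Cs k) ∩
      ⋂ k ∈ {k | M < k ∧ P n k}, Ss n k with hA
  set B : ℕ → Set X := fun k =>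
    (Ds k ∩ ⋂ n ∈ {n | M < n ∧ n ≤ k ∧ ψ n ≤ k}, Hs n) ∩
      ⋂ n ∈ {n | M < n ∧ P n k}, Ts n k with hB
  have memA : ∀ n, M < n → A n ∈ F n := by
    intro n hn
    refine Filter.inter_mem (Filter.inter_mem ((hEH n hn).1) ?_) ?_
    · refine (Filter.biInter_mem (Set.Finite.subset (Set.finite_Iic n) ?_)).mpr ?_
      · intro k hk; exact hk.2.1
      · intro k hk
        exact (hCD k hk.1).1 n hk.2.2
    · refine (Filter.biInter_mem (Set.Finite.subset (Set.finite_Iic (max n (ψ n))) ?_)).mpr ?_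
      · intro k hk
        rcases hk.2 with ⟨h1, _⟩ | ⟨_, h2⟩
        · exact le_trans h1 (le_max_left _ _)
        · exact le_trans (le_of_lt h2) (le_max_right _ _)
      · intro k hk
        exact (hST n k hn hk.1).1
  have memB : ∀ k, M < k → B k ∈ G k := by
    intro k hk
    refine Filter.inter_mem (Filter.inter_mem ((hCD k hk).2.1) ?_) ?_
    · refine (Filter.biInter_mem (Set.Finite.subset (Set.finite_Iic k) ?_)).mpr ?_
      · intro n hn; exact hn.2.1
      · intro n hn
        exact (hEH n hn.1).2.1 k hn.2.2
    · refine (Filter.biInter_mem (Set.Finite.subset (Set.finite_Iic (max k (φ k))) ?_)).mpr ?_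
      · intro n hn
        rcases hn.2 with ⟨_, h2⟩ | ⟨h1, _⟩
        · exact le_trans (le_of_lt h2) (le_max_right _ _)
        · exact le_trans h1 (le_max_left _ _)
      · intro n hn
        exact (hST n k hn.1 hk).2.1
  -- the contour members
  have hUA : (⋃ n ∈ Set.Ioi M, A n) ∈ contourSeq F := by
    refine mem_contourSeq.mpr ⟨M + 1, fun n hn => ?_⟩
    exact Filter.mem_of_superset (memA n (by omega))
      (Set.subset_biUnion_of_mem (show n ∈ Set.Ioi M by simp; omega))
  have hUB : (⋃ k ∈ Set.Ioi M, B k) ∈ contourSeq G := by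
    refine mem_contourSeq.mpr ⟨M + 1, fun k hk => ?_⟩
    exact Filter.mem_of_superset (memB k (by omega))
      (Set.subset_biUnion_of_mem (show k ∈ Set.Ioi M by simp; omega))
  -- disjointness
  obtain ⟨x, hxA, hxB⟩ := h _ hUA _ hUB
  simp only [Set.mem_iUnion, Set.mem_Ioi] at hxA hxB
  obtain ⟨n, hn, hxA⟩ := hxA
  obtain ⟨k, hk, hxB⟩ := hxB
  obtain ⟨⟨hxE, hxC⟩, hxS⟩ := hxA
  obtain ⟨⟨hxD, hxH⟩, hxT⟩ := hxB
  simp only [Set.mem_iInter, Set.mem_setOf_eq] at hxC hxS hxH hxT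
  by_cases hPnk : P n k
  · have hx1 : x ∈ Ss n k := hxS k ⟨hk, hPnk⟩
    have hx2 : x ∈ Ts n k := hxT n ⟨hn, hPnk⟩
    have := (hST n k hn hk).2.2
    exact absurd (Set.mem_inter hx1 hx2) (by rw [this]; exact Set.notMem_empty x)
  · by_cases hkn : k ≤ n
    · have hφ : φ k ≤ n := by
        by_contra hc
        exact hPnk (Or.inl ⟨hkn, by omega⟩)
      have hx1 : x ∈ Cs k := hxC k ⟨hk, hkn, hφ⟩
      have := (hCD k hk).2.2
      exact absurd (Set.mem_inter hx1 hxD) (by rw [this]; exact Set.notMem_empty x)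
    · have hnk : n ≤ k := le_of_lt (lt_of_not_ge hkn)
      have hψ : ψ n ≤ k := by
        by_contra hc
        exact hPnk (Or.inr ⟨hnk, by omega⟩)
      have hx2 : x ∈ Hs n := hxH n ⟨hn, hnk, hψ⟩
      have := (hEH n hn).2.2
      exact absurd (Set.mem_inter hxE hx2) (by rw [this]; exact Set.notMem_empty x)
end

section
/- Let (F_n) and (G_k) be sequences of filters on X with contours F := Li F_n and G := Li G_k. If F meshes G and there exists m such that F_n does not mesh G_k for all n,k > m, and F does not mesh G_k for all k > m, and F_n does not mesh G for all n > m, then one obtains a contradiction; in particular there exist sets F ∈ F and G ∈ G with F ∩ G = ∅ under the negation of all three alternatives. -/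
open Filter

theorem contour_alternative_contradiction {X : Type*} (F G : ℕ → Filter X)
    (h : Mesh (contourSeq F) (contourSeq G)) (m : ℕ)
    (h1 : ∀ n k, m < n → m < k → ¬ Mesh (F n) (G k))
    (h2 : ∀ k, m < k → ¬ Mesh (contourSeq F) (G k))
    (h3 : ∀ n, m < n → ¬ Mesh (F n) (contourSeq G)) :
    False := by
  classical
  have not_mesh : ∀ (f g : Filter X), ¬ Mesh f g → ∃ A ∈ f, ∃ B ∈ g, A ∩ B = ∅ := by
    intro f g hfg
    rw [Mesh] at hfg
    push_neg at hfg
    obtain ⟨A, hA, B, hB, hAB⟩ := hfg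
    exact ⟨A, hA, B, hB, hAB⟩
  have mem_contour : ∀ (H : ℕ → Filter X) (A : Set X), A ∈ contourSeq H →
      ∃ N, ∀ k, N ≤ k → A ∈ H k := by
    intro H A hA
    rw [contourSeq, Filter.mem_bind] at hA
    obtain ⟨t, ht, hts⟩ := hA
    obtain ⟨N, hN⟩ := Filter.mem_atTop_sets.mp ht
    exact ⟨N, fun k hk => hts k (hN k hk)⟩
  have contour_of : ∀ (H : ℕ → Filter X) (A : Set X) (N : ℕ),
      (∀ k, N ≤ k → A ∈ H k) → A ∈ contourSeq H := by
    intro H A N hA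
    rw [contourSeq, Filter.mem_bind]
    exact ⟨Set.Ici N, Filter.mem_atTop N, fun k hk => hA k hk⟩
  have key3 : ∀ n, ∃ Cn Dn M', m < n → Cn ∈ F n ∧ (∀ k, M' ≤ k → Dn ∈ G k) ∧ Cn ∩ Dn = ∅ := by
    intro n
    by_cases hn : m < n
    · obtain ⟨Cn, hC, Dn, hD, hCD⟩ := not_mesh _ _ (h3 n hn)
      obtain ⟨M', hM'⟩ := mem_contour G Dn hD
      exact ⟨Cn, Dn, M', fun _ => ⟨hC, hM', hCD⟩⟩
    · exact ⟨∅, ∅, 0, fun hc => absurd hc hn⟩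
  have key2 : ∀ k, ∃ Bk Ek N', m < k → Bk ∈ G k ∧ (∀ n, N' ≤ n → Ek ∈ F n) ∧ Ek ∩ Bk = ∅ := by
    intro k
    by_cases hk : m < k
    · obtain ⟨Ek, hE, Bk, hB, hEB⟩ := not_mesh _ _ (h2 k hk)
      obtain ⟨N', hN'⟩ := mem_contour F Ek hE
      exact ⟨Bk, Ek, N', fun _ => ⟨hB, hN', hEB⟩⟩
    · exact ⟨∅, ∅, 0, fun hc => absurd hc hk⟩
  have key1 : ∀ n k, ∃ Pnk Qnk, m < n → m < k → Pnk ∈ F n ∧ Qnk ∈ G k ∧ Pnk ∩ Qnk = ∅ := by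
    intro n k
    by_cases hn : m < n
    · by_cases hk : m < k
      · obtain ⟨P, hP, Q, hQ, hPQ⟩ := not_mesh _ _ (h1 n k hn hk)
        exact ⟨P, Q, fun _ _ => ⟨hP, hQ, hPQ⟩⟩
      · exact ⟨∅, ∅, fun _ hc => absurd hc hk⟩
    · exact ⟨∅, ∅, fun hc => absurd hc hn⟩
  choose C D Mf hkey3 using key3
  choose B E Nf hkey2 using key2
  choose P Q hkey1 using key1
  set U : ℕ → Set X := fun n =>
    C n ∩ ⋂ k ∈ Finset.Ioc m (max n (Mf n)),
      ((if k ≤ n ∧ Nf k ≤ n then E k else Set.univ) ∩ P n k) with hUdef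
  set V : ℕ → Set X := fun k =>
    B k ∩ ⋂ n ∈ Finset.Ioc m (max k (Nf k)),
      ((if n ≤ k ∧ Mf n ≤ k then D n else Set.univ) ∩ Q n k) with hVdef
  have hUmem : ∀ n, m < n → U n ∈ F n := by
    intro n hn
    refine Filter.inter_mem (hkey3 n hn).1 ?_
    refine (Filter.biInter_finset_mem _).mpr ?_
    intro k hk
    have hmk : m < k := (Finset.mem_Ioc.mp hk).1
    refine Filter.inter_mem ?_ ((hkey1 n k hn hmk).1)
    split_ifs with hc
    · exact (hkey2 k hmk).2.1 n hc.2
    · exact Filter.univ_mem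
  have hVmem : ∀ k, m < k → V k ∈ G k := by
    intro k hk
    refine Filter.inter_mem (hkey2 k hk).1 ?_
    refine (Filter.biInter_finset_mem _).mpr ?_
    intro n hn
    have hmn : m < n := (Finset.mem_Ioc.mp hn).1
    refine Filter.inter_mem ?_ ((hkey1 n k hmn hk).2.1)
    split_ifs with hc
    · exact (hkey3 n hmn).2.1 k hc.2
    · exact Filter.univ_mem
  have hdisj : ∀ n k, m < n → m < k → ∀ x, x ∈ U n → x ∈ V k → False := by
    intro n k hn hk x hxU hxV
    obtain ⟨hxC, hxI⟩ := hxU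
    obtain ⟨hxB, hxI'⟩ := hxV
    by_cases h1c : n ≤ k ∧ Mf n ≤ k
    · have hnmem : n ∈ Finset.Ioc m (max k (Nf k)) :=
        Finset.mem_Ioc.mpr ⟨hn, le_trans h1c.1 (le_max_left _ _)⟩
      have hx := Set.mem_iInter₂.mp hxI' n hnmem
      rw [if_pos h1c] at hx
      have : x ∈ C n ∩ D n := ⟨hxC, hx.1⟩
      rw [(hkey3 n hn).2.2] at this
      exact this
    · by_cases h2c : k ≤ n ∧ Nf k ≤ n
      · have hkmem : k ∈ Finset.Ioc m (max n (Mf n)) :=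
          Finset.mem_Ioc.mpr ⟨hk, le_trans h2c.1 (le_max_left _ _)⟩
        have hx := Set.mem_iInter₂.mp hxI k hkmem
        rw [if_pos h2c] at hx
        have : x ∈ E k ∩ B k := ⟨hx.1, hxB⟩
        rw [(hkey2 k hk).2.2] at this
        exact this
      · have hkmem : k ∈ Finset.Ioc m (max n (Mf n)) := by
          refine Finset.mem_Ioc.mpr ⟨hk, ?_⟩
          rcases le_total n k with hle | hle
          · have hM : ¬ Mf n ≤ k := fun hMk => h1c ⟨hle, hMk⟩
            exact le_trans (le_of_lt (lt_of_not_ge hM)) (le_max_right _ _)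
          · exact le_trans hle (le_max_left _ _)
        have hnmem : n ∈ Finset.Ioc m (max k (Nf k)) := by
          refine Finset.mem_Ioc.mpr ⟨hn, ?_⟩
          rcases le_total k n with hle | hle
          · have hN : ¬ Nf k ≤ n := fun hNn => h2c ⟨hle, hNn⟩
            exact le_trans (le_of_lt (lt_of_not_ge hN)) (le_max_right _ _)
          · exact le_trans hle (le_max_left _ _)
        have hxP : x ∈ P n k := (Set.mem_iInter₂.mp hxI k hkmem).2
        have hxQ : x ∈ Q n k := (Set.mem_iInter₂.mp hxI' n hnmem).2
        have : x ∈ P n k ∩ Q n k := ⟨hxP, hxQ⟩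
        rw [(hkey1 n k hn hk).2.2] at this
        exact this
  have hUc : (⋃ n ∈ Set.Ioi m, U n) ∈ contourSeq F := by
    refine contour_of F _ (m + 1) ?_
    intro n hn
    have hmn : m < n := hn
    exact Filter.mem_of_superset (hUmem n hmn) (Set.subset_biUnion_of_mem hmn)
  have hVc : (⋃ k ∈ Set.Ioi m, V k) ∈ contourSeq G := by
    refine contour_of G _ (m + 1) ?_
    intro k hk
    have hmk : m < k := hk
    exact Filter.mem_of_superset (hVmem k hmk) (Set.subset_biUnion_of_mem hmk)
  obtain ⟨x, hxU, hxV⟩ := h _ hUc _ hVc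
  obtain ⟨n, hn, hxUn⟩ := Set.mem_iUnion₂.mp hxU
  obtain ⟨k, hk, hxVk⟩ := Set.mem_iUnion₂.mp hxV
  exact hdisj n k hn hk x hxUn hxVk
end

section
/- If (F_n) is a totally disjoint sequence of filters on X and (G_k) is a sequence of filters each finer than the contour F := Li F_n, then for all n, k: G_k does not mesh F_n, the contour G := Li G_k does not mesh F_n, and G_k meshes F. -/
open Filter

theorem only_last_case {X : Type*} (F G : ℕ → Filter X) (hF : TotallyDisjoint F)
    (hG : ∀ k, (G k).NeBot) (hfine : ∀ k, ∀ A ∈ contourSeq F, A ∈ G k) :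
    ∀ n k, ¬ Mesh (G k) (F n) ∧ ¬ Mesh (contourSeq G) (F n) ∧ Mesh (G k) (contourSeq F) := by
  obtain ⟨A, hA, hdisj⟩ := hF
  intro n k
  -- B n := union of A m for m ≠ n, belongs to contourSeq F and is disjoint from A n
  set B : Set X := ⋃ m ∈ {m | m ≠ n}, A m with hB
  have hBcontour : B ∈ contourSeq F := by
    rw [contourSeq, mem_bind]
    refine ⟨Set.Ici (n + 1), mem_atTop _, fun m hm => ?_⟩
    exact mem_of_superset (hA m) (Set.subset_biUnion_of_mem (Nat.ne_of_gt hm))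
  have hBAn : B ∩ A n = ∅ := by
    rw [Set.eq_empty_iff_forall_notMem]
    rintro x ⟨hxB, hxA⟩
    obtain ⟨m, hm, hx⟩ := Set.mem_iUnion₂.mp hxB
    exact (hdisj hm).le_bot ⟨hx, hxA⟩
  have hBG : ∀ j, B ∈ G j := fun j => hfine j B hBcontour
  refine ⟨fun h => ?_, fun h => ?_, fun P hP Q hQ => ?_⟩
  · obtain ⟨x, hx⟩ := h B (hBG k) (A n) (hA n)
    rw [hBAn] at hx; exact hx
  · have : B ∈ contourSeq G := by
      rw [contourSeq, mem_bind]
      exact ⟨Set.univ, univ_mem, fun j _ => hBG j⟩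
    obtain ⟨x, hx⟩ := h B this (A n) (hA n)
    rw [hBAn] at hx; exact hx
  · have : P ∩ Q ∈ G k := inter_mem hP (hfine k Q hQ)
    exact (hG k).nonempty_of_mem this
end

section
/- For a sequence of filters (F_n) on X, the set of ultrafilters finer than the contour Li F_n equals the Kuratowski–Painlevé upper limit of the sequence of Stone-closed sets (βF_n): β(Li F_n) = ⋂_{n<ω} cl_β(⋃_{k>n} βF_k). -/
open Filter

/-- `betaSet H` is the set of ultrafilters finer than `H`: the Stone-closed set of `H`. -/
def betaSet {X : Type*} (H : Filter X) : Set (Ultrafilter X) :=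
  {u : Ultrafilter X | (u : Filter X) ≤ H}

theorem betaSet_contour_eq_upper_limit {X : Type*} (F : ℕ → Filter X) :
    betaSet (contourSeq F) = ⋂ n : ℕ, closure (⋃ (k : ℕ) (_ : n < k), betaSet (F k)) := by
  ext u
  simp only [Set.mem_iInter]
  constructor
  · intro hu n
    rw [ultrafilterBasis_is_basis.mem_closure_iff]
    rintro _ ⟨A, rfl⟩ hA
    by_contra h
    rw [Set.not_nonempty_iff_eq_empty, Set.eq_empty_iff_forall_notMem] at h
    have hc : ∀ k, n < k → Aᶜ ∈ F k := by
      intro k hk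
      by_contra hAc
      have hne : F k ⊓ 𝓟 A ≠ ⊥ := by
        rwa [ne_eq, inf_principal_eq_bot]
      haveI : (F k ⊓ 𝓟 A).NeBot := ⟨hne⟩
      obtain ⟨v, hv⟩ := Filter.exists_ultrafilter_le (F k ⊓ 𝓟 A)
      exact h v ⟨le_principal_iff.mp (hv.trans inf_le_right),
        Set.mem_iUnion.mpr ⟨k, Set.mem_iUnion.mpr ⟨hk, hv.trans inf_le_left⟩⟩⟩
    have : Aᶜ ∈ contourSeq F := by
      rw [contourSeq, mem_bind']
      · exact Filter.eventually_atTop.mpr ⟨n + 1, fun k hk => hc k (Nat.lt_of_succ_le hk)⟩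
    exact (Ultrafilter.compl_notMem_iff.mpr hA) (hu this)
  · intro hu A hA
    rw [contourSeq, Filter.mem_bind] at hA
    obtain ⟨s, hs, hsA⟩ := hA
    obtain ⟨m, hm⟩ := Filter.mem_atTop_sets.mp hs
    by_contra hAu
    have hAc : Aᶜ ∈ u := Ultrafilter.compl_mem_iff_notMem.mpr hAu
    have := (ultrafilterBasis_is_basis.mem_closure_iff).mp (hu m) {v | Aᶜ ∈ v} ⟨Aᶜ, rfl⟩ hAc
    obtain ⟨v, hv1, hv2⟩ := this
    rw [Set.mem_iUnion] at hv2
    obtain ⟨k, hk⟩ := hv2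
    rw [Set.mem_iUnion] at hk
    obtain ⟨hmk, hvk⟩ := hk
    have hAv : A ∈ v := hvk (hsA k (hm k hmk.le))
    exact (Ultrafilter.compl_notMem_iff.mpr hAv) hv1
end

section
/- (Stone space Alternative) Let (A_n) and (B_k) be sequences of closed sets in the Stone space βX. If (Ls A_n) ∩ (Ls B_k) ≠ ∅, then one of the following holds: (1) for every m there is (n,k) with m < min(n,k) and A_n ∩ B_k ≠ ∅; (2) (Ls A_n) ∩ B_k ≠ ∅ for infinitely many k; (3) A_n ∩ (Ls B_k) ≠ ∅ for infinitely many n. -/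
/-- The Kuratowski–Painlevé upper limit of a sequence of sets in the Stone space. -/
def upperLimit {X : Type*} (A : ℕ → Set (Ultrafilter X)) : Set (Ultrafilter X) :=
  ⋂ n : ℕ, closure (⋃ (k : ℕ) (_ : n < k), A k)

open Set Filter TopologicalSpace

namespace StoneAlt

variable {X : Type*}

/-- The basic clopen set in the Stone space determined by `s ⊆ X`. -/
def hat (s : Set X) : Set (Ultrafilter X) := {u | s ∈ u}

lemma hat_union (s t : Set X) : hat (s ∪ t) = hat s ∪ hat t := by
  ext u; simp [hat, Ultrafilter.union_mem_iff]

lemma hat_mono {s t : Set X} (h : s ⊆ t) : hat s ⊆ hat t :=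
  fun _ hu => Filter.mem_of_superset hu h

lemma isClosed_hat (s : Set X) : IsClosed (hat s) := ultrafilter_isClosed_basic s

lemma disjoint_sets_of_disjoint_hat {s t : Set X}
    (h : Disjoint (hat s) (hat t)) : Disjoint s t := by
  rw [Set.disjoint_left] at h ⊢
  intro x hs ht
  have h1 : (pure x : Ultrafilter X) ∈ hat s := by simpa [hat] using hs
  have h2 : (pure x : Ultrafilter X) ∈ hat t := by simpa [hat] using ht
  exact h h1 h2

/-- Separation of disjoint closed sets in the Stone space by a basic clopen set. -/
lemma exists_sep {C D : Set (Ultrafilter X)} (hC : IsClosed C) (hD : IsClosed D)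
    (h : Disjoint C D) : ∃ s : Set X, C ⊆ hat s ∧ Disjoint (hat s) D := by
  have key : ∀ u : C, ∃ s : Set X, s ∈ (u : Ultrafilter X) ∧ hat s ⊆ Dᶜ := by
    rintro ⟨u, hu⟩
    have hu' : u ∈ Dᶜ := fun hd => (Set.disjoint_left.mp h hu) hd
    obtain ⟨t, ht, hut, hsub⟩ :=
      ultrafilterBasis_is_basis.exists_subset_of_mem_open hu' hD.isOpen_compl
    obtain ⟨s, rfl⟩ := ht
    exact ⟨s, hut, hsub⟩
  choose s hs1 hs2 using key
  have hcov : C ⊆ ⋃ i : C, hat (s i) := by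
    intro v hv
    exact mem_iUnion.2 ⟨⟨v, hv⟩, hs1 ⟨v, hv⟩⟩
  obtain ⟨F, hF⟩ := (hC.isCompact).elim_finite_subcover (fun i : C => hat (s i))
    (fun i => ultrafilter_isOpen_basic (s i)) hcov
  refine ⟨⋃ i ∈ F, s i, ?_, ?_⟩
  · intro v hv
    obtain ⟨i, hiF, hvi⟩ := mem_iUnion₂.mp (hF hv)
    exact Filter.mem_of_superset hvi (Set.subset_biUnion_of_mem hiF)
  · rw [Set.disjoint_left]
    intro v hv hvD
    have : ∃ i ∈ (F : Set C), s i ∈ v :=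
      (Ultrafilter.finite_biUnion_mem_iff F.finite_toSet).mp hv
    obtain ⟨i, _, hiv⟩ := this
    exact hs2 i hiv hvD

open Classical in
/-- A choice of separating basic set (junk value `∅` if none exists). -/
noncomputable def sep (C D : Set (Ultrafilter X)) : Set X :=
  if h : ∃ s : Set X, C ⊆ hat s ∧ Disjoint (hat s) D then h.choose else ∅

lemma sep_spec {C D : Set (Ultrafilter X)} (hC : IsClosed C) (hD : IsClosed D)
    (h : Disjoint C D) : C ⊆ hat (sep C D) ∧ Disjoint (hat (sep C D)) D := by
  have hex := exists_sep hC hD h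
  rw [sep, dif_pos hex]
  exact hex.choose_spec

/-- Accumulating sequences of separating sets. -/
noncomputable def acc (A' B' : ℕ → Set (Ultrafilter X)) (SC TC : Set (Ultrafilter X)) :
    ℕ → Set X × Set X
  | 0 => (∅, ∅)
  | (n+1) =>
    let p := acc A' B' SC TC n
    let s := sep (A' n) (TC ∪ hat p.2)
    let t := sep (B' n) (SC ∪ hat (p.1 ∪ s))
    (p.1 ∪ s, p.2 ∪ t)

lemma acc_spec (A' B' : ℕ → Set (Ultrafilter X)) (SC TC : Set (Ultrafilter X))
    (hA : ∀ n, IsClosed (A' n)) (hB : ∀ n, IsClosed (B' n))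
    (hSC : IsClosed SC) (hTC : IsClosed TC)
    (hAS : ∀ n, A' n ⊆ SC) (hBT : ∀ n, B' n ⊆ TC)
    (hAT : ∀ n, Disjoint (A' n) TC) (hBS : ∀ n, Disjoint (B' n) SC) :
    ∀ n, Disjoint (hat (acc A' B' SC TC n).1) TC ∧
         Disjoint (hat (acc A' B' SC TC n).2) SC ∧
         Disjoint (hat (acc A' B' SC TC n).1) (hat (acc A' B' SC TC n).2) ∧
         (∀ j < n, A' j ⊆ hat (acc A' B' SC TC n).1 ∧ B' j ⊆ hat (acc A' B' SC TC n).2) := by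
  intro n
  induction n with
  | zero =>
    refine ⟨?_, ?_, ?_, ?_⟩ <;>
      simp [acc, hat, Set.disjoint_left, (Ultrafilter.empty_notMem)]
  | succ n ih =>
    obtain ⟨ih1, ih2, ih3, ih4⟩ := ih
    set p := acc A' B' SC TC n with hp
    -- the chosen separator for `A' n`
    have hsd : Disjoint (A' n) (TC ∪ hat p.2) := by
      refine Set.disjoint_union_right.mpr ⟨hAT n, ?_⟩
      exact (ih2.symm).mono_left (hAS n)
    obtain ⟨hs1, hs2⟩ := sep_spec (hA n) (hTC.union (isClosed_hat _)) hsd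
    set s := sep (A' n) (TC ∪ hat p.2) with hs
    have hs2T : Disjoint (hat s) TC := hs2.mono_right Set.subset_union_left
    have hs2P : Disjoint (hat s) (hat p.2) := hs2.mono_right Set.subset_union_right
    -- the chosen separator for `B' n`
    have hPsT : Disjoint (hat (p.1 ∪ s)) TC := by
      rw [hat_union, Set.disjoint_union_left]; exact ⟨ih1, hs2T⟩
    have htd : Disjoint (B' n) (SC ∪ hat (p.1 ∪ s)) := by
      refine Set.disjoint_union_right.mpr ⟨hBS n, ?_⟩
      exact (hPsT.symm).mono_left (hBT n)
    obtain ⟨ht1, ht2⟩ := sep_spec (hB n) (hSC.union (isClosed_hat _)) htd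
    set t := sep (B' n) (SC ∪ hat (p.1 ∪ s)) with ht
    have ht2S : Disjoint (hat t) SC := ht2.mono_right Set.subset_union_left
    have ht2P : Disjoint (hat t) (hat (p.1 ∪ s)) := ht2.mono_right Set.subset_union_right
    have hacc : acc A' B' SC TC (n+1) = (p.1 ∪ s, p.2 ∪ t) := rfl
    rw [hacc]
    refine ⟨?_, ?_, ?_, ?_⟩
    · exact hPsT
    · rw [hat_union, Set.disjoint_union_left]; exact ⟨ih2, ht2S⟩
    · rw [hat_union, hat_union, Set.disjoint_union_left, Set.disjoint_union_right,
        Set.disjoint_union_right]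
      exact ⟨⟨ih3, (ht2P.symm).mono_left (hat_mono Set.subset_union_left)⟩,
        ⟨hs2P, (ht2P.symm).mono_left (hat_mono Set.subset_union_right)⟩⟩
    · intro j hj
      rcases Nat.lt_succ_iff_lt_or_eq.mp hj with hj' | rfl
      · obtain ⟨hja, hjb⟩ := ih4 j hj'
        exact ⟨hja.trans (hat_mono Set.subset_union_left),
          hjb.trans (hat_mono Set.subset_union_left)⟩
      · exact ⟨hs1.trans (hat_mono Set.subset_union_right),
          ht1.trans (hat_mono Set.subset_union_right)⟩

lemma acc_mono (A' B' : ℕ → Set (Ultrafilter X)) (SC TC : Set (Ultrafilter X)) :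
    ∀ n m, n ≤ m → (acc A' B' SC TC n).1 ⊆ (acc A' B' SC TC m).1 ∧
      (acc A' B' SC TC n).2 ⊆ (acc A' B' SC TC m).2 := by
  intro n m hnm
  induction hnm with
  | refl => exact ⟨subset_rfl, subset_rfl⟩
  | step h ih =>
    obtain ⟨h1, h2⟩ := ih
    refine ⟨h1.trans ?_, h2.trans ?_⟩ <;>
      · simp only [acc]
        exact Set.subset_union_left

/-- If `v` is in the closure of the tail union past `M` but not in the upper limit,
then `v` belongs to some individual `B k` with `k > M`. -/
lemma mem_of_mem_closure_tail (B : ℕ → Set (Ultrafilter X)) (hB : ∀ k, IsClosed (B k))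
    (M : ℕ) (v : Ultrafilter X) (hv : v ∈ closure (⋃ (k : ℕ) (_ : M < k), B k))
    (hvLs : v ∉ upperLimit B) : ∃ k, M < k ∧ v ∈ B k := by
  simp only [upperLimit, Set.mem_iInter, not_forall] at hvLs
  obtain ⟨j, hj⟩ := hvLs
  set j' := max j M with hj'
  have hj'2 : v ∉ closure (⋃ (k : ℕ) (_ : j' < k), B k) := by
    intro hc
    exact hj (closure_mono (Set.iUnion₂_mono' fun k hk => ⟨k, lt_of_le_of_lt (le_max_left j M) hk, subset_rfl⟩) hc)
  have hsplit : (⋃ (k : ℕ) (_ : M < k), B k) ⊆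
      (⋃ k ∈ Set.Ioc M j', B k) ∪ (⋃ (k : ℕ) (_ : j' < k), B k) := by
    intro x hx
    obtain ⟨k, hk, hxk⟩ := Set.mem_iUnion₂.mp hx
    rcases le_or_gt k j' with hkj | hkj
    · exact Or.inl (Set.mem_biUnion ⟨hk, hkj⟩ hxk)
    · exact Or.inr (Set.mem_biUnion hkj hxk)
  have hclosedfin : IsClosed (⋃ k ∈ Set.Ioc M j', B k) :=
    (Set.finite_Ioc M j').isClosed_biUnion fun k _ => hB k
  have : v ∈ (⋃ k ∈ Set.Ioc M j', B k) ∪ closure (⋃ (k : ℕ) (_ : j' < k), B k) := by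
    have := closure_mono hsplit hv
    rwa [closure_union, hclosedfin.closure_eq] at this
  rcases this with hfin | htail
  · obtain ⟨k, ⟨hk1, _⟩, hvk⟩ := Set.mem_iUnion₂.mp hfin
    exact ⟨k, hk1, hvk⟩
  · exact absurd htail hj'2

end StoneAlt

theorem stone_alternative {X : Type*} (A B : ℕ → Set (Ultrafilter X))
    (hA : ∀ n, IsClosed (A n)) (hB : ∀ k, IsClosed (B k))
    (h : (upperLimit A ∩ upperLimit B).Nonempty) :
    (∀ m, ∃ n k, m < n ∧ m < k ∧ (A n ∩ B k).Nonempty) ∨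
      {k | (upperLimit A ∩ B k).Nonempty}.Infinite ∨
      {n | (A n ∩ upperLimit B).Nonempty}.Infinite := by
  by_contra hcon
  push_neg at hcon
  obtain ⟨h1, h2, h3⟩ := hcon
  obtain ⟨m, hm⟩ := h1
  obtain ⟨u, huA, huB⟩ := h
  obtain ⟨M2, hM2⟩ := h2.bddAbove
  obtain ⟨M3, hM3⟩ := h3.bddAbove
  set M := max m (max M2 M3) with hMdef
  have hmM : m ≤ M := le_max_left _ _
  have hM2M : M2 ≤ M := le_trans (le_max_left _ _) (le_max_right _ _)
  have hM3M : M3 ≤ M := le_trans (le_max_right _ _) (le_max_right _ _)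
  set S := ⋃ (k : ℕ) (_ : M < k), A k with hSdef
  set T := ⋃ (k : ℕ) (_ : M < k), B k with hTdef
  have huS : u ∈ closure S := by
    simp only [upperLimit, Set.mem_iInter] at huA
    exact huA M
  have huT : u ∈ closure T := by
    simp only [upperLimit, Set.mem_iInter] at huB
    exact huB M
  set A' : ℕ → Set (Ultrafilter X) := fun n => A (M + 1 + n) with hA'def
  set B' : ℕ → Set (Ultrafilter X) := fun n => B (M + 1 + n) with hB'def
  have hAS : ∀ n, A' n ⊆ closure S := by
    intro n
    refine Set.Subset.trans ?_ subset_closure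
    intro x hx
    exact Set.mem_iUnion₂.mpr ⟨M + 1 + n, by omega, hx⟩
  have hBT : ∀ n, B' n ⊆ closure T := by
    intro n
    refine Set.Subset.trans ?_ subset_closure
    intro x hx
    exact Set.mem_iUnion₂.mpr ⟨M + 1 + n, by omega, hx⟩
  have hAT : ∀ n : ℕ, Disjoint (A' n) (closure T) := by
    intro n
    rw [Set.disjoint_left]
    intro v hvA hvT
    by_cases hvLs : v ∈ upperLimit B
    · have hmem : (M + 1 + n) ∈ {n | (A n ∩ upperLimit B).Nonempty} := ⟨v, hvA, hvLs⟩
      have := hM3 hmem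
      omega
    · obtain ⟨k, hk, hvk⟩ := StoneAlt.mem_of_mem_closure_tail B hB M v hvT hvLs
      exact Set.eq_empty_iff_forall_notMem.mp
        (hm (M + 1 + n) k (by omega) (by omega)) v ⟨hvA, hvk⟩
  have hBS : ∀ n : ℕ, Disjoint (B' n) (closure S) := by
    intro n
    rw [Set.disjoint_left]
    intro v hvB hvS
    by_cases hvLs : v ∈ upperLimit A
    · have hmem : (M + 1 + n) ∈ {k | (upperLimit A ∩ B k).Nonempty} := ⟨v, hvLs, hvB⟩
      have := hM2 hmem
      omega
    · obtain ⟨k, hk, hvk⟩ := StoneAlt.mem_of_mem_closure_tail A hA M v hvS hvLs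
      exact Set.eq_empty_iff_forall_notMem.mp
        (hm k (M + 1 + n) (by omega) (by omega)) v ⟨hvk, hvB⟩
  have spec := StoneAlt.acc_spec A' B' (closure S) (closure T)
    (fun n => hA _) (fun n => hB _) isClosed_closure isClosed_closure hAS hBT hAT hBS
  set F := StoneAlt.acc A' B' (closure S) (closure T) with hFdef
  set Sinf := ⋃ n, (F n).1 with hSinf
  set Tinf := ⋃ n, (F n).2 with hTinf
  have hSu : Sinf ∈ u := by
    have hsub : S ⊆ StoneAlt.hat Sinf := by
      intro v hv
      obtain ⟨k, hk, hvk⟩ := Set.mem_iUnion₂.mp hv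
      have hv' : v ∈ A' (k - (M + 1)) := by
        have heq : M + 1 + (k - (M + 1)) = k := by omega
        simpa only [hA'def, heq] using hvk
      have hmem := ((spec (k - (M + 1) + 1)).2.2.2 (k - (M + 1)) (by omega)).1 hv'
      exact StoneAlt.hat_mono (Set.subset_iUnion (fun n => (F n).1) _) hmem
    exact closure_minimal hsub (StoneAlt.isClosed_hat _) huS
  have hTu : Tinf ∈ u := by
    have hsub : T ⊆ StoneAlt.hat Tinf := by
      intro v hv
      obtain ⟨k, hk, hvk⟩ := Set.mem_iUnion₂.mp hv
      have hv' : v ∈ B' (k - (M + 1)) := by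
        have heq : M + 1 + (k - (M + 1)) = k := by omega
        simpa only [hB'def, heq] using hvk
      have hmem := ((spec (k - (M + 1) + 1)).2.2.2 (k - (M + 1)) (by omega)).2 hv'
      exact StoneAlt.hat_mono (Set.subset_iUnion (fun n => (F n).2) _) hmem
    exact closure_minimal hsub (StoneAlt.isClosed_hat _) huT
  have hdisj : Sinf ∩ Tinf = ∅ := by
    rw [Set.eq_empty_iff_forall_notMem]
    rintro x ⟨hxS, hxT⟩
    rw [hSinf, Set.mem_iUnion] at hxS
    rw [hTinf, Set.mem_iUnion] at hxT
    obtain ⟨i, hi⟩ := hxS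
    obtain ⟨j, hj⟩ := hxT
    have hx1 : x ∈ (F (max i j)).1 :=
      (StoneAlt.acc_mono A' B' (closure S) (closure T) i (max i j) (le_max_left _ _)).1 hi
    have hx2 : x ∈ (F (max i j)).2 :=
      (StoneAlt.acc_mono A' B' (closure S) (closure T) j (max i j) (le_max_right _ _)).2 hj
    exact Set.disjoint_left.mp
      (StoneAlt.disjoint_sets_of_disjoint_hat (spec (max i j)).2.2.1) hx1 hx2
  have hemp : (∅ : Set X) ∈ u := by
    have := Filter.inter_mem hSu hTu
    rwa [hdisj] at this
  exact Ultrafilter.empty_notMem hemp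
end

section
/- There exist a countable set A of ultrafilters and a countable set B of ultrafilters on ω such that the Stone-topology sets of cluster points of A and B coincide (∂_β A = ∂_β B := Ls of the singletons), but A \ B is infinite. Concretely: if (p_n) is a totally disjoint sequence of ultrafilters and (q_k) is defined by q_{2k} := p_k and q_{2k+1} any element of ∂_β{p_m : m<ω}, then ∂_β{p_m : m<ω} = ∂_β{q_k : k<ω} while {q_k} \ {p_m} is infinite. -/
/-- The upper limit `∂_β` of a sequence of ultrafilters (as points of the Stone space):
`⋂ₙ cl {p k : k > n}`. -/
def seqDeriv (p : ℕ → Ultrafilter ℕ) : Set (Ultrafilter ℕ) :=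
  ⋂ n : ℕ, closure {u : Ultrafilter ℕ | ∃ k, n < k ∧ u = p k}

theorem deriv_eq_but_not_almost_equal (p q : ℕ → Ultrafilter ℕ) (X : ℕ → Set ℕ)
    (hX : ∀ n, X n ∈ p n) (hdisj : Pairwise fun m n => Disjoint (X m) (X n))
    (hq : Function.Injective q)
    (heven : ∀ k, q (2 * k) = p k)
    (hodd : ∀ k, q (2 * k + 1) ∈ seqDeriv p) :
    seqDeriv p = seqDeriv q ∧ (Set.range q \ Set.range p).Infinite := by
  have hps : ∀ m, p m ∉ seqDeriv p := by
    intro m hm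
    have h1 : p m ∈ closure {u : Ultrafilter ℕ | ∃ k, m < k ∧ u = p k} :=
      Set.mem_iInter.mp hm m
    obtain ⟨u, huO, k, hk, rfl⟩ :=
      (mem_closure_iff.mp h1) _ (ultrafilter_isOpen_basic (X m)) (hX m)
    have hempty : (∅ : Set ℕ) ∈ p k := by
      have := (p k).toFilter.inter_mem huO (hX k)
      rwa [(hdisj (Nat.ne_of_lt hk)).inter_eq] at this
    exact (p k).toFilter.empty_notMem hempty
  have hsub1 : seqDeriv p ⊆ seqDeriv q := by
    intro u hu
    apply Set.mem_iInter.mpr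
    intro n
    refine closure_mono ?_ (Set.mem_iInter.mp hu n)
    rintro v ⟨k, hk, rfl⟩
    exact ⟨2 * k, by omega, (heven k).symm⟩
  have hsub2 : seqDeriv q ⊆ seqDeriv p := by
    intro u hu
    apply Set.mem_iInter.mpr
    intro n
    have h := Set.mem_iInter.mp hu (2 * n + 1)
    have hsub : {v : Ultrafilter ℕ | ∃ k, 2 * n + 1 < k ∧ v = q k} ⊆
        closure {u : Ultrafilter ℕ | ∃ k, n < k ∧ u = p k} := by
      rintro v ⟨k, hk, rfl⟩
      rcases Nat.even_or_odd k with ⟨m, hm⟩ | ⟨m, hm⟩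
      · have hk2 : k = 2 * m := by omega
        subst hk2
        rw [heven]
        exact subset_closure ⟨m, by omega, rfl⟩
      · subst hm
        exact Set.mem_iInter.mp (hodd m) n
    exact closure_minimal hsub isClosed_closure h
  have hinj : Function.Injective (fun k : ℕ => q (2 * k + 1)) := by
    intro a b h
    have := hq h
    omega
  refine ⟨Set.Subset.antisymm hsub1 hsub2,
    Set.infinite_of_injective_forall_mem hinj ?_⟩
  intro k
  refine ⟨⟨2 * k + 1, rfl⟩, ?_⟩
  rintro ⟨m, hm⟩
  exact hps m (by rw [hm]; exact hodd k)
end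

section
/- If A and B are countable sets of ultrafilters on ω that are each totally disjoint (each admits pairwise disjoint sets, one per ultrafilter) and ∂_β A = ∂_β B in the Stone space, then A and B are almost equal, i.e., the symmetric difference A △ B is finite. -/
/-- The set `∂_β S` of cluster points of a set `S` in the Stone space:
points lying in the closure of every cofinite part of `S`. -/
def setDeriv (S : Set (Ultrafilter ℕ)) : Set (Ultrafilter ℕ) :=
  ⋂ (F : Set (Ultrafilter ℕ)) (_ : F.Finite), closure (S \ F)

/-- A set of ultrafilters is totally disjoint if one can pick pairwise disjoint
sets, one from each of its members. -/
def TotallyDisjointSet (A : Set (Ultrafilter ℕ)) : Prop :=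
  ∃ f : Ultrafilter ℕ → Set ℕ, (∀ u ∈ A, f u ∈ (u : Ultrafilter ℕ)) ∧
    A.Pairwise fun u v => Disjoint (f u) (f v)

open Set Filter Topology

lemma setDeriv_subset (S F : Set (Ultrafilter ℕ)) (hF : F.Finite) :
    setDeriv S ⊆ closure (S \ F) := fun p hp => Set.mem_iInter₂.mp hp F hF

/-- The derived set of an infinite set is nonempty (compactness). -/
lemma setDeriv_nonempty {D : Set (Ultrafilter ℕ)} (hD : D.Infinite) :
    (setDeriv D).Nonempty := by
  have heq : setDeriv D = ⋂ (F : {F : Set (Ultrafilter ℕ) // F.Finite}), closure (D \ F.1) := by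
    rw [setDeriv]
    ext p
    simp only [Set.mem_iInter, Subtype.forall]
  rw [heq]
  have : Nonempty {F : Set (Ultrafilter ℕ) // F.Finite} := ⟨⟨∅, Set.finite_empty⟩⟩
  apply IsCompact.nonempty_iInter_of_directed_nonempty_isCompact_isClosed
  · intro F F'
    refine ⟨⟨F.1 ∪ F'.1, F.2.union F'.2⟩, ?_, ?_⟩
    · exact closure_mono (Set.diff_subset_diff_right Set.subset_union_left)
    · exact closure_mono (Set.diff_subset_diff_right Set.subset_union_right)
  · intro F
    exact ((hD.diff F.2).nonempty).mono subset_closure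
  · intro F
    exact isClosed_closure.isCompact
  · intro F
    exact isClosed_closure

/-- If `v ∉ setDeriv A` and `v ∉ A`, there is a set in `v` avoiding all of `A`. -/
lemma exists_avoid {A : Set (Ultrafilter ℕ)} {v : Ultrafilter ℕ}
    (hv : v ∉ setDeriv A) (hvA : v ∉ A) : ∃ s ∈ v, ∀ u ∈ A, s ∉ u := by
  rw [setDeriv, Set.mem_iInter₂] at hv
  push_neg at hv
  obtain ⟨F, hF, hcl⟩ := hv
  obtain ⟨b, hb, hvb, hsub⟩ := ultrafilterBasis_is_basis.exists_subset_of_mem_open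
    (show v ∈ (closure (A \ F))ᶜ from hcl) isClosed_closure.isOpen_compl
  obtain ⟨s, rfl⟩ := hb
  -- now : s ∈ v (hvb), and basic set avoids closure (A \ F)
  have hsel : ∀ u : Ultrafilter ℕ, u ≠ v → ∃ t, t ∈ v ∧ t ∉ u := by
    intro u hne
    by_contra hc
    push_neg at hc
    have hle : (u : Filter ℕ) ≤ (v : Filter ℕ) := fun t ht => hc t ht
    exact hne (Ultrafilter.coe_le_coe.mp hle)
  classical
  let t : Ultrafilter ℕ → Set ℕ := fun u => if h : u ≠ v then Classical.choose (hsel u h) else Set.univ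
  have ht : ∀ u, t u ∈ v ∧ (u ≠ v → t u ∉ u) := by
    intro u
    by_cases h : u ≠ v
    · simp only [t, dif_pos h]
      exact ⟨(Classical.choose_spec (hsel u h)).1, fun _ => (Classical.choose_spec (hsel u h)).2⟩
    · simp only [t, dif_neg h]
      exact ⟨Filter.univ_mem, fun h' => absurd h' h⟩
  refine ⟨s ∩ ⋂ u ∈ hF.toFinset, t u, ?_, ?_⟩
  · refine Filter.inter_mem hvb ?_
    exact (Filter.biInter_finset_mem _).mpr fun u _ => (ht u).1
  · intro u hu hmem
    by_cases hufF : u ∈ F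
    · have hne : u ≠ v := fun e => hvA (e ▸ hu)
      have h1 : t u ∈ u := by
        refine Filter.mem_of_superset hmem ?_
        refine Set.inter_subset_right.trans ?_
        exact Set.biInter_subset_of_mem (hF.mem_toFinset.mpr hufF)
      exact (ht u).2 hne h1
    · have h1 : s ∈ u := Filter.mem_of_superset hmem Set.inter_subset_left
      have : u ∈ closure (A \ F) := subset_closure ⟨hu, hufF⟩
      exact hsub h1 this

/-- A totally disjoint set is disjoint from its own derived set. -/
lemma notMem_setDeriv_self {B : Set (Ultrafilter ℕ)} (hBd : TotallyDisjointSet B)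
    {v : Ultrafilter ℕ} (hv : v ∈ B) : v ∉ setDeriv B := by
  obtain ⟨f, hf, hdisj⟩ := hBd
  intro hmem
  have h1 : v ∈ closure (B \ {v}) := Set.mem_iInter₂.mp hmem {v} (Set.finite_singleton v)
  rw [mem_closure_iff] at h1
  obtain ⟨w, hw1, hw2⟩ := h1 {u : Ultrafilter ℕ | f v ∈ u} (ultrafilter_isOpen_basic _) (hf v hv)
  have hne : v ≠ w := fun e => hw2.2 e.symm
  have hdvw : Disjoint (f v) (f w) := hdisj hv hw2.1 hne
  have : f v ∩ f w ∈ w := Filter.inter_mem hw1 (hf w hw2.1)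
  rw [Set.disjoint_iff_inter_eq_empty.mp hdvw] at this
  exact Ultrafilter.empty_notMem this

/-- Main lemma: `B \ A` is finite. -/
lemma diff_finite_of_deriv_eq {A B : Set (Ultrafilter ℕ)} (hA : A.Countable)
    (hBd : TotallyDisjointSet B) (h : setDeriv A = setDeriv B) : (B \ A).Finite := by
  by_contra hinf
  have hinf : (B \ A).Infinite := hinf
  obtain ⟨Y, hY, hYd⟩ := hBd
  let g0 := hinf.natEmbedding
  set g : ℕ → Ultrafilter ℕ := fun n => (g0 n : Ultrafilter ℕ) with hg
  have hginj : Function.Injective g := fun a b hab => g0.injective (Subtype.ext hab)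
  have hgmem : ∀ n, g n ∈ B \ A := fun n => (g0 n).2
  -- case A empty
  rcases A.eq_empty_or_nonempty with rfl | hAne
  · obtain ⟨p, hp⟩ := setDeriv_nonempty (show B.Infinite by simpa using hinf)
    have h1 : p ∈ setDeriv (∅ : Set (Ultrafilter ℕ)) := h ▸ hp
    have h2 := setDeriv_subset ∅ ∅ Set.finite_empty h1
    simp at h2
  obtain ⟨e, he⟩ := hA.exists_eq_range hAne
  have heA : ∀ m, e m ∈ A := fun m => he ▸ Set.mem_range_self m
  have hAe : ∀ u ∈ A, ∃ m, e m = u := by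
    intro u hu
    rw [he] at hu
    exact hu
  -- avoiding sets
  have havoid : ∀ n, ∃ s ∈ g n, ∀ u ∈ A, s ∉ u := by
    intro n
    refine exists_avoid ?_ (hgmem n).2
    rw [h]
    exact notMem_setDeriv_self ⟨Y, hY, hYd⟩ (hgmem n).1
  choose Z hZ1 hZ2 using havoid
  set W : ℕ → Set ℕ := fun n => Y (g n) ∩ Z n with hWdef
  have hWmem : ∀ n, W n ∈ g n := fun n => Filter.inter_mem (hY _ (hgmem n).1) (hZ1 n)
  have hWdisj : ∀ m n, m ≠ n → Disjoint (W m) (W n) := by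
    intro m n hmn
    exact (hYd (hgmem m).1 (hgmem n).1 (fun e => hmn (hginj e))).mono
      Set.inter_subset_left Set.inter_subset_left
  have hWavoid : ∀ n, ∀ u ∈ A, W n ∉ u := fun n u hu hmem =>
    hZ2 n u hu (Filter.mem_of_superset hmem Set.inter_subset_right)
  -- halving lemma
  have half : ∀ (S : Set ℕ), S.Infinite → ∀ u : Ultrafilter ℕ,
      ∃ T, T ⊆ S ∧ T.Infinite ∧ (⋃ n ∈ T, W n) ∉ u := by
    intro S hS u
    set em := hS.natEmbedding with hem
    have heminj : Function.Injective (fun k => ((em k : ℕ))) :=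
      fun a b hab => em.injective (Subtype.ext hab)
    set S1 : Set ℕ := Set.range fun k => ((em (2*k) : ℕ)) with hS1def
    set S2 : Set ℕ := Set.range fun k => ((em (2*k+1) : ℕ)) with hS2def
    have hS1S : S1 ⊆ S := by rintro x ⟨k, rfl⟩; exact (em (2*k)).2
    have hS2S : S2 ⊆ S := by rintro x ⟨k, rfl⟩; exact (em (2*k+1)).2
    have hS1inf : S1.Infinite := Set.infinite_range_of_injective
      (fun a b hab => by have := heminj hab; omega)
    have hS2inf : S2.Infinite := Set.infinite_range_of_injective
      (fun a b hab => by have := heminj hab; omega)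
    have hdisj : Disjoint (⋃ n ∈ S1, W n) (⋃ n ∈ S2, W n) := by
      rw [Set.disjoint_left]
      intro x hx1 hx2
      obtain ⟨n, hn, hxn⟩ := Set.mem_iUnion₂.mp hx1
      obtain ⟨m, hm, hxm⟩ := Set.mem_iUnion₂.mp hx2
      obtain ⟨k1, rfl⟩ := hn
      obtain ⟨k2, rfl⟩ := hm
      by_cases hnm : ((em (2*k1) : ℕ)) = ((em (2*k2+1) : ℕ))
      · have := heminj hnm; omega
      · exact Set.disjoint_left.mp (hWdisj _ _ hnm) hxn hxm
    by_cases hc : (⋃ n ∈ S1, W n) ∈ u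
    · refine ⟨S2, hS2S, hS2inf, fun hc2 => ?_⟩
      have : (⋃ n ∈ S1, W n) ∩ (⋃ n ∈ S2, W n) ∈ u := Filter.inter_mem hc hc2
      rw [Set.disjoint_iff_inter_eq_empty.mp hdisj] at this
      exact Ultrafilter.empty_notMem this
    · exact ⟨S1, hS1S, hS1inf, hc⟩
  -- decreasing chain
  have step : ∀ (m : ℕ) (S : {T : Set ℕ // T.Infinite}),
      ∃ S' : {T : Set ℕ // T.Infinite}, S'.1 ⊆ S.1 ∧ (⋃ n ∈ S'.1, W n) ∉ e m := by
    intro m S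
    obtain ⟨T, h1, h2, h3⟩ := half S.1 S.2 (e m)
    exact ⟨⟨T, h2⟩, h1, h3⟩
  let F : ℕ → {T : Set ℕ // T.Infinite} := fun m =>
    Nat.rec ⟨Set.univ, Set.infinite_univ⟩ (fun m prev => Classical.choose (step m prev)) m
  have hFsucc : ∀ m, F (m+1) = Classical.choose (step m (F m)) := fun m => rfl
  have hF1 : ∀ m, (F (m+1)).1 ⊆ (F m).1 := fun m => (Classical.choose_spec (step m (F m))).1
  have hF2 : ∀ m, (⋃ n ∈ (F (m+1)).1, W n) ∉ e m :=
    fun m => (Classical.choose_spec (step m (F m))).2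
  have hchain : ∀ m k, m ≤ k → (F k).1 ⊆ (F m).1 := by
    intro m k hmk
    induction k with
    | zero => rw [Nat.le_zero.mp hmk]
    | succ k ih =>
      rcases Nat.lt_or_ge m (k+1) with hlt | hge
      · exact (hF1 k).trans (ih (Nat.lt_succ_iff.mp hlt))
      · rw [Nat.le_antisymm hmk hge]
  -- diagonal sequence
  have tstep : ∀ (m x : ℕ), ∃ y, y ∈ (F (m+1)).1 ∧ x < y := by
    intro m x
    obtain ⟨y, hy, hxy⟩ := (F (m+1)).2.exists_gt x
    exact ⟨y, hy, hxy⟩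
  let t : ℕ → ℕ := fun m =>
    Nat.rec (Classical.choose (tstep 0 0)) (fun m prev => Classical.choose (tstep (m+1) prev)) m
  have ht0 : t 0 ∈ (F 1).1 := (Classical.choose_spec (tstep 0 0)).1
  have htsucc : ∀ m, t (m+1) ∈ (F (m+2)).1 ∧ t m < t (m+1) :=
    fun m => Classical.choose_spec (tstep (m+1) (t m))
  have htmem : ∀ m, t m ∈ (F (m+1)).1 := by
    intro m
    cases m with
    | zero => exact ht0
    | succ m => exact (htsucc m).1
  have htmono : StrictMono t := strictMono_nat_of_lt_succ fun m => (htsucc m).2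
  -- the big avoiding set
  set Zs : Set ℕ := ⋃ k, W (t k) with hZsdef
  have hZstar : ∀ m, Zs ∉ e m := by
    intro m hmem
    have hsplit : Zs ⊆ (⋃ k ∈ Set.Iio m, W (t k)) ∪ (⋃ n ∈ (F (m+1)).1, W n) := by
      intro x hx
      obtain ⟨k, hk⟩ := Set.mem_iUnion.mp hx
      rcases Nat.lt_or_ge k m with hkm | hkm
      · exact Or.inl (Set.mem_biUnion hkm hk)
      · exact Or.inr (Set.mem_biUnion (hchain (m+1) (k+1) (by omega) (htmem k)) hk)
    have hout := Filter.mem_of_superset hmem hsplit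
    rcases (Ultrafilter.union_mem_iff).mp hout with h1 | h2
    · obtain ⟨k, _, hk⟩ := (Ultrafilter.finite_biUnion_mem_iff (Set.finite_Iio m)).mp h1
      exact hWavoid (t k) (e m) (heA m) hk
    · exact hF2 m h2
  -- the cluster point
  set D : Set (Ultrafilter ℕ) := Set.range fun m => g (t m) with hDdef
  have hDinf : D.Infinite := Set.infinite_range_of_injective (hginj.comp htmono.injective)
  obtain ⟨p, hp⟩ := setDeriv_nonempty hDinf
  have hDB : D ⊆ B := by rintro _ ⟨m, rfl⟩; exact (hgmem (t m)).1
  have hpB : p ∈ setDeriv B := by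
    rw [setDeriv]
    refine Set.mem_iInter₂.mpr fun G hG => ?_
    exact closure_mono (Set.diff_subset_diff_left hDB) (setDeriv_subset D G hG hp)
  have hpA : p ∈ setDeriv A := by rw [h]; exact hpB
  have hpclA : p ∈ closure A := by
    have := setDeriv_subset A ∅ Set.finite_empty hpA
    rwa [Set.diff_empty] at this
  have hDsub : D ⊆ {q : Ultrafilter ℕ | Zs ∈ q} := by
    rintro _ ⟨m, rfl⟩
    exact Filter.mem_of_superset (hWmem (t m)) (Set.subset_iUnion (fun k => W (t k)) m)
  have hZp : Zs ∈ p := by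
    have h1 : p ∈ closure (D \ ∅) := setDeriv_subset D ∅ Set.finite_empty hp
    rw [Set.diff_empty] at h1
    have h2 := (closure_mono hDsub) h1
    rwa [(ultrafilter_isClosed_basic Zs).closure_eq] at h2
  rw [mem_closure_iff] at hpclA
  obtain ⟨u, hu1, hu2⟩ := hpclA {q : Ultrafilter ℕ | Zs ∈ q} (ultrafilter_isOpen_basic Zs) hZp
  obtain ⟨m, rfl⟩ := hAe u hu2
  exact hZstar m hu1

theorem almost_equal_of_deriv_eq (A B : Set (Ultrafilter ℕ))
    (hA : A.Countable) (hB : B.Countable)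
    (hAd : TotallyDisjointSet A) (hBd : TotallyDisjointSet B)
    (h : setDeriv A = setDeriv B) :
    ((A \ B) ∪ (B \ A)).Finite :=
  (diff_finite_of_deriv_eq hB hAd h.symm).union (diff_finite_of_deriv_eq hA hBd h)
end
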